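/- arXiv:2403.19117 — 7 statements merged into one kernel-verified Lean document; each statement's English description precedes it below -/
import Mathlib

section
/- If $w(\{1,\dots,n\}) < 2^n - 1$, then for every integer $t$ with $0 \le t \le 2^n$, we have $\#\{S \subseteq \{1,\dots,n\} : w(S) < t\} \ge t - d$. -/
/-- Under the pigeonhole promise, for every `0 ≤ t ≤ 2 ^ n` the number of subsets with
sum less than `t` is at least `t - d`. -/
theorem card_below_ge (n : ℕ) (hn : 0 < n) (w : Fin n → ℕ) (hw : ∀ i, 0 < w i)
    (f : ℕ → ℕ)
    (hf : ∀ t, f t = (Finset.univ.filter fun S : Finset (Fin n) => ∑ i ∈ S, w i = t).card)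
    (d : ℕ) (hd : d = ∑ t ∈ Finset.range (2 ^ n), (f t - 1))
    (hsum : ∑ i, w i < 2 ^ n - 1) :
    ∀ t : ℕ, t ≤ 2 ^ n →
      (t : ℤ) - (d : ℤ) ≤
        ((Finset.univ.filter fun S : Finset (Fin n) => ∑ i ∈ S, w i < t).card : ℤ) := by
  intro t ht
  have key : ∀ m : ℕ, (Finset.univ.filter fun S : Finset (Fin n) => ∑ i ∈ S, w i < m).card
      = ∑ s ∈ Finset.range m, f s := by
    intro m
    rw [Finset.card_eq_sum_card_fiberwise (f := fun S => ∑ i ∈ S, w i)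
      (t := Finset.range m) (fun S hS => by
        simp only [Finset.mem_coe, Finset.mem_filter] at hS
        exact Finset.mem_range.mpr hS.2)]
    apply Finset.sum_congr rfl
    intro s hs
    rw [hf s, Finset.filter_filter]
    congr 1
    ext S
    simp only [Finset.mem_filter, Finset.mem_univ, true_and]
    constructor
    · rintro ⟨_, h⟩; exact h
    · intro h; exact ⟨h ▸ Finset.mem_range.mp hs, h⟩
  have total : ∑ s ∈ Finset.range (2 ^ n), f s = 2 ^ n := by
    have h1 : (Finset.univ.filter fun S : Finset (Fin n) => ∑ i ∈ S, w i < 2 ^ n)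
        = Finset.univ := by
      apply Finset.filter_true_of_mem
      intro S _
      calc ∑ i ∈ S, w i ≤ ∑ i, w i :=
            Finset.sum_le_sum_of_subset (Finset.subset_univ S)
        _ < 2 ^ n := lt_of_lt_of_le hsum (Nat.sub_le _ _)
    rw [← key, h1, Finset.card_univ, Fintype.card_finset, Fintype.card_fin]
  rw [key t]
  have hsplit : ∑ s ∈ Finset.range t, f s + ∑ s ∈ Finset.Ico t (2 ^ n), f s = 2 ^ n := by
    rw [Finset.sum_range_add_sum_Ico f ht, total]
  have hdge : ∑ s ∈ Finset.Ico t (2 ^ n), (f s - 1) ≤ d := by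
    rw [hd, ← Finset.sum_range_add_sum_Ico (fun s => f s - 1) ht]
    exact Nat.le_add_left _ _
  have hcast : (∑ s ∈ Finset.Ico t (2 ^ n), (f s : ℤ)) - (2 ^ n - t : ℕ)
      ≤ (∑ s ∈ Finset.Ico t (2 ^ n), (f s - 1) : ℕ) := by
    push_cast
    rw [← Nat.card_Ico t (2 ^ n), Finset.card_eq_sum_ones]
    push_cast
    rw [← Finset.sum_sub_distrib]
    apply Finset.sum_le_sum
    intro s _
    omega
  have hA : ((∑ s ∈ Finset.range t, f s : ℕ) : ℤ) + (∑ s ∈ Finset.Ico t (2 ^ n), (f s : ℤ))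
      = 2 ^ n := by
    push_cast
    exact_mod_cast congrArg (Nat.cast : ℕ → ℤ) hsplit
  have hd2 : ((∑ s ∈ Finset.Ico t (2 ^ n), (f s - 1) : ℕ) : ℤ) ≤ d := by
    exact_mod_cast hdge
  have hct : ((2 ^ n - t : ℕ) : ℤ) = 2 ^ n - t := by
    rw [Nat.cast_sub ht]; push_cast; ring
  linarith
end

section
/- If $0 < w_1 < w_2 < \dots < w_n$ and $w(\{1,\dots,n\}) < 2^n - 1$, then for every $i \in \{1,\dots,n\}$ we have $w_i \le 2^{i-1} + d$. -/
/-- If the weights are strictly increasing and the pigeonhole promise holds, then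
`w i ≤ 2 ^ (i - 1) + d` (with zero-based index `i : Fin n`, the bound is `2 ^ (i : ℕ) + d`). -/
theorem wi_le (n : ℕ) (hn : 0 < n) (w : Fin n → ℕ) (hw : ∀ i, 0 < w i)
    (hsort : ∀ i j : Fin n, i < j → w i < w j)
    (f : ℕ → ℕ)
    (hf : ∀ t, f t = (Finset.univ.filter fun S : Finset (Fin n) => ∑ i ∈ S, w i = t).card)
    (d : ℕ) (hd : d = ∑ t ∈ Finset.range (2 ^ n), (f t - 1))
    (hsum : ∑ i, w i < 2 ^ n - 1) :
    ∀ i : Fin n, w i ≤ 2 ^ (i : ℕ) + d := by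
  intro i
  have hsum_lt : ∀ S : Finset (Fin n), ∑ j ∈ S, w j < 2 ^ n := by
    intro S
    have h1 : ∑ j ∈ S, w j ≤ ∑ j, w j :=
      Finset.sum_le_sum_of_subset (Finset.subset_univ S)
    omega
  have hwi_le : w i ≤ ∑ j, w j :=
    Finset.single_le_sum (fun j _ => Nat.zero_le _) (Finset.mem_univ i)
  have hwi_lt : w i < 2 ^ n := by omega
  -- total count of subsets
  have htot : ∑ t ∈ Finset.range (2 ^ n), f t = 2 ^ n := by
    have h := Finset.card_eq_sum_card_fiberwise
      (s := (Finset.univ : Finset (Finset (Fin n)))) (t := Finset.range (2 ^ n))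
      (f := fun S => ∑ j ∈ S, w j) (fun S _ => Finset.mem_range.2 (hsum_lt S))
    rw [Finset.card_univ, Fintype.card_finset, Fintype.card_fin] at h
    exact (Finset.sum_congr rfl (fun t _ => hf t)).trans h.symm
  set A := (Finset.range (2 ^ n)).filter (fun t => f t ≠ 0) with hAdef
  have hsubA : ∀ (g : ℕ → ℕ), (∀ t, f t = 0 → g t = 0) →
      ∑ t ∈ A, g t = ∑ t ∈ Finset.range (2 ^ n), g t := by
    intro g hg
    refine Finset.sum_subset (Finset.filter_subset _ _) ?_
    intro t ht hnt
    simp only [hAdef, Finset.mem_filter, not_and, not_not] at hnt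
    exact hg t (hnt ht)
  have hAcard : A.card + d = 2 ^ n := by
    have h1 : ∑ t ∈ A, (f t - 1) = d := by
      rw [hd]; exact hsubA _ (fun t h => by omega)
    have h2 : ∑ t ∈ A, f t = 2 ^ n := by
      rw [← htot]; exact hsubA _ (fun t h => h)
    calc A.card + d = ∑ t ∈ A, 1 + ∑ t ∈ A, (f t - 1) := by
          rw [Finset.card_eq_sum_ones, h1]
      _ = ∑ t ∈ A, (1 + (f t - 1)) := (Finset.sum_add_distrib).symm
      _ = ∑ t ∈ A, f t := by
          refine Finset.sum_congr rfl (fun t ht => ?_)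
          have : f t ≠ 0 := (Finset.mem_filter.1 ht).2
          omega
      _ = 2 ^ n := h2
  have hmiss : ((Finset.range (2 ^ n)).filter (fun t => f t = 0)).card = d := by
    have h := Finset.card_filter_add_card_filter_not
      (s := Finset.range (2 ^ n)) (p := fun t => f t ≠ 0)
    simp only [not_not] at h
    rw [Finset.card_range, ← hAdef] at h
    omega
  -- count of subsets with small sum
  have hsmall : ∑ t ∈ Finset.range (w i), f t ≤ 2 ^ (i : ℕ) := by
    set s := Finset.univ.filter (fun S : Finset (Fin n) => ∑ j ∈ S, w j < w i) with hsdef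
    have h := Finset.card_eq_sum_card_fiberwise
      (s := s) (t := Finset.range (w i))
      (f := fun S => ∑ j ∈ S, w j)
      (fun S hS => Finset.mem_range.2 (Finset.mem_filter.1 hS).2)
    have hfib : ∀ t ∈ Finset.range (w i),
        (s.filter fun S => ∑ j ∈ S, w j = t).card = f t := by
      intro t ht
      rw [hf]
      congr 1
      ext S
      simp only [hsdef, Finset.mem_filter, Finset.mem_univ, true_and]
      constructor
      · exact fun h => h.2
      · intro h; exact ⟨by rw [h]; exact Finset.mem_range.1 ht, h⟩
    have hcard : s.card = ∑ t ∈ Finset.range (w i), f t := by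
      rw [h]; exact Finset.sum_congr rfl hfib
    have hsub : s ⊆ (Finset.Iio i).powerset := by
      intro S hS
      rw [Finset.mem_powerset]
      intro j hj
      rw [Finset.mem_Iio]
      by_contra hji
      push_neg at hji
      have hwij : w i ≤ w j := by
        rcases lt_or_eq_of_le hji with h' | h'
        · exact le_of_lt (hsort i j h')
        · rw [h']
      have : w j ≤ ∑ k ∈ S, w k :=
        Finset.single_le_sum (fun k _ => Nat.zero_le _) hj
      have hlt := (Finset.mem_filter.1 hS).2
      omega
    have hpow : ((Finset.Iio i).powerset).card = 2 ^ (i : ℕ) := by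
      rw [Finset.card_powerset, Fin.card_Iio]
    calc ∑ t ∈ Finset.range (w i), f t = s.card := hcard.symm
      _ ≤ ((Finset.Iio i).powerset).card := Finset.card_le_card hsub
      _ = 2 ^ (i : ℕ) := hpow
  -- split range (w i) into achieved and missed
  have hsplit := Finset.card_filter_add_card_filter_not
    (s := Finset.range (w i)) (p := fun t => f t ≠ 0)
  simp only [not_not] at hsplit
  rw [Finset.card_range] at hsplit
  have hach : ((Finset.range (w i)).filter (fun t => f t ≠ 0)).card
      ≤ ∑ t ∈ Finset.range (w i), f t := by
    calc ((Finset.range (w i)).filter (fun t => f t ≠ 0)).card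
        = ∑ t ∈ (Finset.range (w i)).filter (fun t => f t ≠ 0), 1 :=
          Finset.card_eq_sum_ones _
      _ ≤ ∑ t ∈ (Finset.range (w i)).filter (fun t => f t ≠ 0), f t := by
          refine Finset.sum_le_sum (fun t ht => ?_)
          have : f t ≠ 0 := (Finset.mem_filter.1 ht).2
          omega
      _ ≤ ∑ t ∈ Finset.range (w i), f t :=
          Finset.sum_le_sum_of_subset (Finset.filter_subset _ _)
  have hmiss' : ((Finset.range (w i)).filter (fun t => f t = 0)).card ≤ d := by
    rw [← hmiss]
    refine Finset.card_le_card (Finset.filter_subset_filter _ ?_)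
    exact Finset.range_subset_range.2 (le_of_lt hwi_lt)
  omega
end

section
/- If $0 < w_1 < w_2 < \dots < w_n$, $w(\{1,\dots,n\}) < 2^n - 1$, and $d \le \Delta$ for a nonnegative integer $\Delta$, then for every $i \in \{1,\dots,n\}$ we have $w(\{1,\dots,i\}) \le 2^i - 1 + i\Delta$. -/
open Finset

private lemma geom_two_aux (i : ℕ) : ∑ j ∈ Finset.range i, 2 ^ j = 2 ^ i - 1 := by
  induction i with
  | zero => simp
  | succ m ih =>
    rw [Finset.sum_range_succ, ih, pow_succ]
    have : 1 ≤ 2 ^ m := Nat.one_le_two_pow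
    omega

private lemma sum_filter_fin_aux (n i : ℕ) (hi : i ≤ n) (g : ℕ → ℕ) :
    ∑ j ∈ Finset.univ.filter (fun j : Fin n => (j : ℕ) < i), g (j : ℕ)
      = ∑ j ∈ Finset.range i, g j := by
  rw [Finset.sum_filter]
  rw [Fin.sum_univ_eq_sum_range (fun j => if j < i then g j else 0) n]
  rw [← Finset.sum_filter]
  congr 1
  ext t
  simp only [Finset.mem_filter, Finset.mem_range]
  omega

/-- If the weights are strictly increasing, the pigeonhole promise holds and `d ≤ Δ`, then
every prefix sum satisfies `w({1, …, i}) ≤ 2 ^ i - 1 + i * Δ`. -/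
theorem prefix_sum_le (n : ℕ) (hn : 0 < n) (w : Fin n → ℕ) (hw : ∀ i, 0 < w i)
    (hsort : ∀ i j : Fin n, i < j → w i < w j)
    (f : ℕ → ℕ)
    (hf : ∀ t, f t = (Finset.univ.filter fun S : Finset (Fin n) => ∑ i ∈ S, w i = t).card)
    (d : ℕ) (hd : d = ∑ t ∈ Finset.range (2 ^ n), (f t - 1))
    (hsum : ∑ i, w i < 2 ^ n - 1)
    (Δ : ℕ) (hΔ : d ≤ Δ) :
    ∀ i : ℕ, 1 ≤ i → i ≤ n →
      ∑ j ∈ Finset.univ.filter (fun j : Fin n => (j : ℕ) < i), w j ≤ 2 ^ i - 1 + i * Δ := by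
  -- every subset sum is < 2 ^ n
  have htot : ∀ S : Finset (Fin n), ∑ j ∈ S, w j < 2 ^ n := by
    intro S
    calc ∑ j ∈ S, w j ≤ ∑ j, w j :=
          Finset.sum_le_sum_of_subset (Finset.subset_univ S)
    _ < 2 ^ n - 1 := hsum
    _ ≤ 2 ^ n := Nat.sub_le _ _
  -- total count of subsets
  have hsumtot : ∑ t ∈ Finset.range (2 ^ n), f t = 2 ^ n := by
    have h := Finset.card_eq_sum_card_fiberwise
      (f := fun S : Finset (Fin n) => ∑ i ∈ S, w i)
      (s := (Finset.univ : Finset (Finset (Fin n)))) (t := Finset.range (2 ^ n))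
      (fun S _ => Finset.mem_range.mpr (htot S))
    have hcard : (Finset.univ : Finset (Finset (Fin n))).card = 2 ^ n := by
      simp [Finset.card_univ]
    rw [hcard] at h
    have h2 : ∑ t ∈ Finset.range (2 ^ n), f t
        = ∑ b ∈ Finset.range (2 ^ n),
            (Finset.univ.filter fun S : Finset (Fin n) => ∑ i ∈ S, w i = b).card :=
      Finset.sum_congr rfl fun t _ => hf t
    rw [h2]
    exact h.symm
  -- the missed set has cardinality d
  set M := (Finset.range (2 ^ n)).filter (fun t => f t = 0) with hM
  have hMd : M.card = d := by
    set A := (Finset.range (2 ^ n)).filter (fun t => ¬ f t = 0) with hA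
    have hsplit : M.card + A.card = 2 ^ n := by
      have := Finset.card_filter_add_card_filter_not
        (s := Finset.range (2 ^ n)) (p := fun t => f t = 0)
      simpa [hM, hA] using this
    have hdA : d + A.card = 2 ^ n := by
      have h1 : ∑ t ∈ Finset.range (2 ^ n), (f t - 1)
          = ∑ t ∈ A, (f t - 1) := by
        rw [hA]
        rw [Finset.sum_filter]
        refine Finset.sum_congr rfl fun t _ => ?_
        by_cases h : f t = 0 <;> simp [h]
      have h2 : ∑ t ∈ A, (f t - 1) + A.card = ∑ t ∈ A, f t := by
        rw [Finset.card_eq_sum_ones, ← Finset.sum_add_distrib]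
        refine Finset.sum_congr rfl fun t ht => ?_
        have : ¬ f t = 0 := (Finset.mem_filter.mp ht).2
        omega
      have h3 : ∑ t ∈ A, f t = ∑ t ∈ Finset.range (2 ^ n), f t := by
        rw [hA, Finset.sum_filter]
        refine Finset.sum_congr rfl fun t _ => ?_
        by_cases h : f t = 0 <;> simp [h]
      rw [hd, h1, h2, h3, hsumtot]
    omega
  -- key bound: each weight is at most 2 ^ k + Δ
  have hkey : ∀ k : Fin n, w k ≤ 2 ^ (k : ℕ) + Δ := by
    intro k
    -- achieved values below w k
    set Ak := (Finset.range (w k)).filter (fun t => ¬ f t = 0) with hAk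
    set Bk := (Finset.range (w k)).filter (fun t => f t = 0) with hBk
    have hsplitk : Bk.card + Ak.card = w k := by
      have := Finset.card_filter_add_card_filter_not
        (s := Finset.range (w k)) (p := fun t => f t = 0)
      simpa [hBk, hAk] using this
    -- Bk ⊆ M
    have hBkM : Bk ⊆ M := by
      intro t ht
      rw [hBk, Finset.mem_filter] at ht
      rw [hM, Finset.mem_filter]
      refine ⟨Finset.mem_range.mpr ?_, ht.2⟩
      have h1 : t < w k := Finset.mem_range.mp ht.1
      have h2 : w k ≤ ∑ j, w j :=
        Finset.single_le_sum (fun j _ => Nat.zero_le (w j)) (Finset.mem_univ k)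
      omega
    have hBk_le : Bk.card ≤ Δ := le_trans (Finset.card_le_card hBkM) (hMd ▸ hΔ)
    -- Ak is contained in the image of sums of subsets of the first k elements
    have hAk_sub : Ak ⊆ ((Finset.univ.filter (fun j : Fin n => (j : ℕ) < (k : ℕ))).powerset).image
        (fun S => ∑ i ∈ S, w i) := by
      intro t ht
      rw [hAk, Finset.mem_filter] at ht
      obtain ⟨htr, htf⟩ := ht
      have htlt : t < w k := Finset.mem_range.mp htr
      rw [hf t] at htf
      have hne : (Finset.univ.filter fun S : Finset (Fin n) => ∑ i ∈ S, w i = t).Nonempty := by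
        rw [Finset.nonempty_iff_ne_empty]
        intro h
        rw [h] at htf; simp at htf
      obtain ⟨S, hS⟩ := hne
      rw [Finset.mem_filter] at hS
      have hSsum : ∑ i ∈ S, w i = t := hS.2
      refine Finset.mem_image.mpr ⟨S, ?_, hSsum⟩
      rw [Finset.mem_powerset]
      intro j hj
      rw [Finset.mem_filter]
      refine ⟨Finset.mem_univ j, ?_⟩
      by_contra hjk
      push_neg at hjk
      have hwkj : w k ≤ w j := by
        rcases lt_or_eq_of_le hjk with h | h
        · exact le_of_lt (hsort k j (Fin.lt_def.mpr h))
        · have : k = j := Fin.ext h.symm ▸ rfl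
          rw [Fin.ext h.symm]
      have hwj : w j ≤ ∑ i ∈ S, w i :=
        Finset.single_le_sum (fun i _ => Nat.zero_le (w i)) hj
      omega
    have hAk_le : Ak.card ≤ 2 ^ (k : ℕ) := by
      calc Ak.card ≤ _ := Finset.card_le_card hAk_sub
      _ ≤ ((Finset.univ.filter (fun j : Fin n => (j : ℕ) < (k : ℕ))).powerset).card :=
          Finset.card_image_le
      _ = 2 ^ (Finset.univ.filter (fun j : Fin n => (j : ℕ) < (k : ℕ))).card :=
          Finset.card_powerset _
      _ ≤ 2 ^ (k : ℕ) := by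
          apply Nat.pow_le_pow_right (by norm_num)
          have h1 : (Finset.univ.filter (fun j : Fin n => (j : ℕ) < (k : ℕ))).card
              = ∑ j ∈ Finset.range (k : ℕ), 1 := by
            rw [Finset.card_eq_sum_ones]
            exact sum_filter_fin_aux n (k : ℕ) (le_of_lt k.isLt) (fun _ => 1)
          rw [h1, Finset.sum_const, Finset.card_range, smul_eq_mul, mul_one]
    omega
  -- conclude
  intro i hi1 hin
  calc ∑ j ∈ Finset.univ.filter (fun j : Fin n => (j : ℕ) < i), w j
      ≤ ∑ j ∈ Finset.univ.filter (fun j : Fin n => (j : ℕ) < i), (2 ^ (j : ℕ) + Δ) :=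
        Finset.sum_le_sum (fun j _ => hkey j)
  _ = ∑ j ∈ Finset.range i, (2 ^ j + Δ) :=
        sum_filter_fin_aux n i hin (fun j => 2 ^ j + Δ)
  _ = (∑ j ∈ Finset.range i, 2 ^ j) + i * Δ := by
        rw [Finset.sum_add_distrib, Finset.sum_const, Finset.card_range, smul_eq_mul]
  _ = 2 ^ i - 1 + i * Δ := by rw [geom_two_aux]
end

section
/- Suppose $0 < w_1 < w_2 < \dots < w_n$, $w(\{1,\dots,n\}) < 2^n - 1$, $w(\{1,\dots,i\}) \ge 2^i - 1$ for all $i \in \{1,\dots,n-1\}$, and $d \le \Delta$ for a nonnegative integer $\Delta$. Then for every $i \in \{1,\dots,n\}$, we have $2^{i-1} - i\Delta \le w_i \le 2^{i-1} + \Delta$ (i.e., $w_i - 2^{i-1} \in [-i\Delta, \Delta]$). -/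
/-- If the weights are strictly increasing, the pigeonhole promise holds, all proper prefixes
satisfy `w({1, …, i}) ≥ 2 ^ i - 1`, and `d ≤ Δ`, then `w i - 2 ^ (i-1) ∈ [-iΔ, Δ]`
(with zero-based index `i : Fin n`: `2 ^ (i:ℕ) - (i+1)Δ ≤ w i ≤ 2 ^ (i:ℕ) + Δ`). -/
theorem wi_sandwich (n : ℕ) (hn : 0 < n) (w : Fin n → ℕ) (hw : ∀ i, 0 < w i)
    (hsort : ∀ i j : Fin n, i < j → w i < w j)
    (f : ℕ → ℕ)
    (hf : ∀ t, f t = (Finset.univ.filter fun S : Finset (Fin n) => ∑ i ∈ S, w i = t).card)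
    (d : ℕ) (hd : d = ∑ t ∈ Finset.range (2 ^ n), (f t - 1))
    (hsum : ∑ i, w i < 2 ^ n - 1)
    (hprefix : ∀ i : ℕ, 1 ≤ i → i ≤ n - 1 →
      2 ^ i - 1 ≤ ∑ j ∈ Finset.univ.filter (fun j : Fin n => (j : ℕ) < i), w j)
    (Δ : ℕ) (hΔ : d ≤ Δ) :
    ∀ i : Fin n,
      (2 : ℤ) ^ (i : ℕ) - ((i : ℕ) + 1) * (Δ : ℤ) ≤ (w i : ℤ) ∧
      w i ≤ 2 ^ (i : ℕ) + Δ := by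
  classical
  set g : Finset (Fin n) → ℕ := fun S => ∑ i ∈ S, w i with hg
  set W : ℕ := ∑ i, w i with hWdef
  set V : Finset ℕ := Finset.image g Finset.univ with hV
  have hmono : ∀ i j : Fin n, i ≤ j → w i ≤ w j := by
    intro i j h
    rcases lt_or_eq_of_le h with h | h
    · exact (hsort i j h).le
    · rw [h]
  have hgW : ∀ S, g S ≤ W := fun S =>
    Finset.sum_le_sum_of_subset (Finset.subset_univ S)
  have h2n : 2 ≤ 2 ^ n := by
    have : (2:ℕ) ^ 1 ≤ 2 ^ n := Nat.pow_le_pow_right (by norm_num) hn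
    simpa using this
  have hW2 : W + 2 ≤ 2 ^ n := by omega
  -- counting: 2^n = ∑ f t over range (2^n)
  have hfib : ∑ t ∈ Finset.range (2 ^ n), f t = 2 ^ n := by
    calc ∑ t ∈ Finset.range (2 ^ n), f t
        = ∑ t ∈ Finset.range (2 ^ n),
            (Finset.univ.filter fun S : Finset (Fin n) => g S = t).card :=
          Finset.sum_congr rfl fun t _ => hf t
      _ = (Finset.univ : Finset (Finset (Fin n))).card :=
          (Finset.card_eq_sum_card_fiberwise
            (fun S _ => Finset.mem_range.2 (by have := hgW S; omega))).symm
      _ = 2 ^ n := by simp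
  -- key: 2^n ≤ V.card + d
  have hVcard : 2 ^ n ≤ V.card + d := by
    have hptwise : ∀ t ∈ Finset.range (2 ^ n),
        f t ≤ (f t - 1) + (if t ∈ V then 1 else 0) := by
      intro t _
      by_cases h : t ∈ V
      · simp only [h, if_pos]; omega
      · have : f t = 0 := by
          rw [hf, Finset.card_eq_zero, Finset.filter_eq_empty_iff]
          intro S _
          intro hS
          exact h (Finset.mem_image.2 ⟨S, Finset.mem_univ S, hS⟩)
        omega
    have h1 : ∑ t ∈ Finset.range (2 ^ n), f t ≤
        ∑ t ∈ Finset.range (2 ^ n), ((f t - 1) + (if t ∈ V then 1 else 0)) :=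
      Finset.sum_le_sum hptwise
    rw [Finset.sum_add_distrib] at h1
    have h2 : (∑ t ∈ Finset.range (2 ^ n), if t ∈ V then 1 else 0) ≤ V.card := by
      rw [← Finset.card_filter]
      exact Finset.card_le_card (fun x hx => (Finset.mem_filter.1 hx).2)
    omega
  -- the per-index upper bound: w i + 1 ≤ 2 ^ i + d
  have hwiW : ∀ i : Fin n, w i ≤ W :=
    fun i => Finset.single_le_sum (fun _ _ => Nat.zero_le _) (Finset.mem_univ i)
  have hupper : ∀ i : Fin n, w i + 1 ≤ 2 ^ (i : ℕ) + d := by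
    intro i
    set pre : Finset (Fin n) := Finset.univ.filter (fun j => (j : ℕ) < (i : ℕ)) with hpre
    have hpre_card : pre.card = (i : ℕ) := by
      have heq : pre = Finset.Iio i := by
        rw [hpre]
        ext j
        simp only [Finset.mem_filter, Finset.mem_univ, true_and, Finset.mem_Iio,
          Fin.lt_def]
      rw [heq, Fin.card_Iio]
    have hsplit : V ⊆ (Finset.image g pre.powerset) ∪ Finset.Icc (w i) W := by
      intro t ht
      obtain ⟨S, -, rfl⟩ := Finset.mem_image.1 ht
      by_cases hcase : w i ≤ g S
      · exact Finset.mem_union_right _ (Finset.mem_Icc.2 ⟨hcase, hgW S⟩)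
      · refine Finset.mem_union_left _ (Finset.mem_image.2 ⟨S, ?_, rfl⟩)
        rw [Finset.mem_powerset]
        intro j hj
        rw [hpre, Finset.mem_filter]
        refine ⟨Finset.mem_univ _, ?_⟩
        by_contra hk
        push_neg at hk
        have h1 : w i ≤ w j := hmono i j hk
        have h2 : w j ≤ g S :=
          Finset.single_le_sum (fun _ _ => Nat.zero_le _) hj
        omega
    have hcard1 : (Finset.image g pre.powerset).card ≤ 2 ^ (i : ℕ) := by
      calc (Finset.image g pre.powerset).card ≤ pre.powerset.card :=
            Finset.card_image_le
        _ = 2 ^ (i : ℕ) := by rw [Finset.card_powerset, hpre_card]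
    have hcard2 : (Finset.Icc (w i) W).card = W + 1 - w i := Nat.card_Icc _ _
    have hVle : V.card ≤ 2 ^ (i : ℕ) + (W + 1 - w i) := by
      calc V.card ≤ ((Finset.image g pre.powerset) ∪ Finset.Icc (w i) W).card :=
            Finset.card_le_card hsplit
        _ ≤ (Finset.image g pre.powerset).card + (Finset.Icc (w i) W).card :=
            Finset.card_union_le _ _
        _ ≤ 2 ^ (i : ℕ) + (W + 1 - w i) := by rw [hcard2]; omega
    have := hwiW i
    omega
  -- prefix sums
  set P : ℕ → ℕ := fun m => ∑ j ∈ Finset.univ.filter (fun j : Fin n => (j : ℕ) < m), w j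
    with hP
  have hP0 : P 0 = 0 := by
    rw [hP]
    simp
  have hPstep : ∀ k (hk : k < n), P (k + 1) = P k + w ⟨k, hk⟩ := by
    intro k hk
    have hins : Finset.univ.filter (fun j : Fin n => (j : ℕ) < k + 1)
        = insert (⟨k, hk⟩ : Fin n) (Finset.univ.filter (fun j : Fin n => (j : ℕ) < k)) := by
      ext j
      simp only [Finset.mem_filter, Finset.mem_univ, true_and, Finset.mem_insert,
        Fin.ext_iff]
      omega
    rw [hP]
    simp only [hins]
    rw [Finset.sum_insert (by simp), add_comm]
  have hPn : P n = W := by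
    rw [hP, hWdef]
    simp only []
    rw [Finset.filter_true_of_mem (fun j _ => j.isLt)]
  have hCn : 2 ^ n ≤ W + 1 + d := by
    have hVr : V ⊆ Finset.range (W + 1) := by
      intro t ht
      obtain ⟨S, -, rfl⟩ := Finset.mem_image.1 ht
      exact Finset.mem_range.2 (by have := hgW S; omega)
    have := Finset.card_le_card hVr
    rw [Finset.card_range] at this
    omega
  have hPlow : ∀ k, 1 ≤ k → k ≤ n → 2 ^ k ≤ P k + d + 1 := by
    intro k hk1 hk2
    rcases lt_or_eq_of_le hk2 with h | h
    · have hthis : 2 ^ k - 1 ≤ P k := hprefix k hk1 (by omega)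
      omega
    · rw [h, hPn]; omega
  have hPup : ∀ k, k ≤ n → P k + k + 1 ≤ 2 ^ k + k * d := by
    intro k
    induction k with
    | zero => intro _; omega
    | succ k ih =>
      intro hk
      have hkn : k < n := by omega
      have h1 := ih (by omega)
      have h2 := hupper ⟨k, hkn⟩
      rw [hPstep k hkn]
      simp only [Fin.val_mk] at h2 ⊢
      have hp : 2 ^ (k + 1) = 2 ^ k + 2 ^ k := by ring
      have hm : (k + 1) * d = k * d + d := by ring
      omega
  -- conclude
  intro i
  have hk : (i : ℕ) < n := i.isLt
  have hlow : 2 ^ ((i : ℕ) + 1) ≤ P ((i : ℕ) + 1) + d + 1 :=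
    hPlow _ (by omega) (by omega)
  have hstep : P ((i : ℕ) + 1) = P (i : ℕ) + w i := by
    have := hPstep (i : ℕ) hk
    simpa using this
  have hup := hPup (i : ℕ) (by omega)
  have hu := hupper i
  constructor
  · have hmul : ((i : ℕ) + 1 : ℤ) * d ≤ ((i : ℕ) + 1 : ℤ) * Δ := by
      apply mul_le_mul_of_nonneg_left (by exact_mod_cast hΔ) (by positivity)
    rw [hstep] at hlow
    have hcast : ((2 : ℤ) ^ ((i : ℕ) + 1)) ≤ (P (i : ℕ) : ℤ) + (w i : ℤ) + d + 1 := by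
      exact_mod_cast hlow
    have hcast2 : (P (i : ℕ) : ℤ) + (i : ℕ) + 1 ≤ 2 ^ (i : ℕ) + (i : ℕ) * d := by
      exact_mod_cast hup
    have hpow : ((2 : ℤ) ^ ((i : ℕ) + 1)) = 2 ^ (i : ℕ) + 2 ^ (i : ℕ) := by ring
    push_cast at hcast2 ⊢
    nlinarith [hcast, hcast2, hmul]
  · omega
end

section
/- Let $1 \le i^* \le n$, let $A = \{1,\dots,i^*\}$ and $B = \{i^*+1,\dots,n\}$, let $\Delta \ge 0$, let $T$ be an integer, and let $B' \subseteq B$ with $\sigma = \sum_{j\in B'} 2^{j-1}$. Assume $w(A) < 2^{i^*} + n\Delta$ and $|w(B') - \sigma| \le n^2\Delta$. Then: (i) if $\sigma \le T - 2^{i^*} - (n+n^2)\Delta$, then $w(A') + w(B') \le T$ for every $A' \subseteq A$; and (ii) if $\sigma > T + n^2\Delta$, then $w(A') + w(B') > T$ for every $A' \subseteq A$. -/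
/-- Case analysis of the query algorithm: with `A = {1,…,i*}`, `B = {i*+1,…,n}`,
`σ = ∑_{j ∈ B'} 2^(j-1)`, `w(A) < 2^{i*} + nΔ`, and `|w(B') - σ| ≤ n²Δ`:
(i) if `σ ≤ T - 2^{i*} - (n + n²)Δ` then every `A' ⊆ A` gives `w(A') + w(B') ≤ T`;
(ii) if `σ > T + n²Δ` then every `A' ⊆ A` gives `w(A') + w(B') > T`. -/
theorem query_cases (n : ℕ) (hn : 0 < n) (w : Fin n → ℕ) (hw : ∀ i, 0 < w i)
    (istar : ℕ) (hi1 : 1 ≤ istar) (hi2 : istar ≤ n)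
    (Δ T : ℤ) (hΔ : 0 ≤ Δ)
    (A B : Finset (Fin n))
    (hA : A = Finset.univ.filter fun j : Fin n => (j : ℕ) < istar)
    (hB : B = Finset.univ.filter fun j : Fin n => istar ≤ (j : ℕ))
    (B' : Finset (Fin n)) (hB' : B' ⊆ B)
    (σ : ℤ) (hσ : σ = ∑ j ∈ B', (2 : ℤ) ^ (j : ℕ))
    (hwA : (∑ j ∈ A, (w j : ℤ)) < 2 ^ istar + n * Δ)
    (happrox : |(∑ j ∈ B', (w j : ℤ)) - σ| ≤ (n : ℤ) ^ 2 * Δ) :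
    (σ ≤ T - 2 ^ istar - ((n : ℤ) + (n : ℤ) ^ 2) * Δ →
      ∀ A' ⊆ A, (∑ j ∈ A', (w j : ℤ)) + ∑ j ∈ B', (w j : ℤ) ≤ T) ∧
    (T + (n : ℤ) ^ 2 * Δ < σ →
      ∀ A' ⊆ A, T < (∑ j ∈ A', (w j : ℤ)) + ∑ j ∈ B', (w j : ℤ)) := by
  obtain ⟨h1, h2⟩ := abs_le.1 happrox
  constructor
  · intro hσT A' hA'sub
    have hAle : ∑ j ∈ A', (w j : ℤ) ≤ ∑ j ∈ A, (w j : ℤ) :=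
      Finset.sum_le_sum_of_subset_of_nonneg hA'sub (fun i _ _ => by positivity)
    nlinarith
  · intro hσT A' hA'sub
    have hA0 : (0 : ℤ) ≤ ∑ j ∈ A', (w j : ℤ) :=
      Finset.sum_nonneg (fun i _ => by positivity)
    linarith
end

section
/- Let $\Delta$ be a positive real with $\Delta \le d$. Then there exists $j \in \{0,1,\dots,n-1\}$ such that $\#\{t \in \mathbb{N} : f_t > 2^j\} > \frac{\Delta}{2^{j+1} n}$. -/
/-- If `0 < Δ ≤ d`, then there exists `j ∈ {0, …, n-1}` such that the number of values `t`
with frequency `f t > 2 ^ j` exceeds `Δ / (2 ^ (j+1) * n)`. -/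
theorem exists_heavy_level (n : ℕ) (hn : 0 < n) (w : Fin n → ℕ) (hw : ∀ i, 0 < w i)
    (f : ℕ → ℕ)
    (hf : ∀ t, f t = (Finset.univ.filter fun S : Finset (Fin n) => ∑ i ∈ S, w i = t).card)
    (d : ℕ) (hd : d = ∑ t ∈ Finset.range (2 ^ n), (f t - 1))
    (Δ : ℝ) (hΔ0 : 0 < Δ) (hΔd : Δ ≤ (d : ℝ)) :
    ∃ j < n, Δ / (2 ^ (j + 1) * n) < ({t : ℕ | 2 ^ j < f t}.ncard : ℝ) := by
  by_contra hcon
  push_neg at hcon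
  set W := ∑ i, w i with hW
  have hfW : ∀ t, 0 < f t → t ≤ W := by
    intro t ht
    rw [hf, Finset.card_pos] at ht
    obtain ⟨S, hS⟩ := ht
    simp only [Finset.mem_filter] at hS
    rw [← hS.2]
    exact Finset.sum_le_sum_of_subset (Finset.subset_univ S)
  have hf2n : ∀ t, f t ≤ 2 ^ n := by
    intro t
    rw [hf]
    calc (Finset.univ.filter fun S : Finset (Fin n) => ∑ i ∈ S, w i = t).card
        ≤ (Finset.univ : Finset (Finset (Fin n))).card := Finset.card_filter_le _ _
      _ = 2 ^ n := by simp
  set T : ℕ → Finset ℕ := fun j => (Finset.range (W + 1)).filter (fun t => 2 ^ j < f t) with hT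
  have hset : ∀ j, {t : ℕ | 2 ^ j < f t} = ↑(T j) := by
    intro j; ext t
    simp only [hT, Finset.coe_filter, Finset.mem_range, Set.mem_setOf_eq]
    constructor
    · intro h
      exact ⟨Nat.lt_succ_of_le (hfW t (lt_of_le_of_lt (Nat.zero_le _) h)), h⟩
    · exact fun h => h.2
  have hsum2 : ∀ k : ℕ, ∑ j ∈ Finset.range k, 2 ^ j = 2 ^ k - 1 := by
    intro k
    induction k with
    | zero => simp
    | succ k ih =>
      rw [Finset.sum_range_succ, ih, pow_succ]
      have := Nat.one_le_two_pow (n := k)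
      omega
  have hpt : ∀ m, m ≤ 2 ^ n →
      m - 1 ≤ ∑ j ∈ (Finset.range n).filter (fun j => 2 ^ j < m), 2 ^ j := by
    intro m hm
    rcases Nat.lt_or_ge m 2 with h2 | h2
    · interval_cases m <;> simp
    · have hm1 : 1 ≤ m - 1 := by omega
      set k := Nat.log 2 (m - 1) + 1 with hk
      have hmk : m - 1 < 2 ^ k := Nat.lt_pow_succ_log_self (by norm_num) (m - 1)
      have hfil : (Finset.range n).filter (fun j => 2 ^ j < m) = Finset.range k := by
        ext j
        simp only [Finset.mem_filter, Finset.mem_range, hk]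
        constructor
        · rintro ⟨_, hj⟩
          have h1 : 2 ^ j ≤ m - 1 := by omega
          have := Nat.le_log_of_pow_le (by norm_num) h1
          omega
        · intro hj
          have h1 : 2 ^ j ≤ 2 ^ Nat.log 2 (m - 1) :=
            Nat.pow_le_pow_right (by norm_num) (by omega)
          have h2' : 2 ^ Nat.log 2 (m - 1) ≤ m - 1 := Nat.pow_log_le_self 2 (by omega)
          have hjm : 2 ^ j < m := by omega
          refine ⟨?_, hjm⟩
          by_contra hjn
          push_neg at hjn
          have : 2 ^ n ≤ 2 ^ j := Nat.pow_le_pow_right (by norm_num) hjn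
          omega
      rw [hfil, hsum2]
      omega
  have hkey : d ≤ ∑ j ∈ Finset.range n, 2 ^ j * (T j).card := by
    rw [hd]
    calc ∑ t ∈ Finset.range (2 ^ n), (f t - 1)
        ≤ ∑ t ∈ Finset.range (2 ^ n),
            ∑ j ∈ (Finset.range n).filter (fun j => 2 ^ j < f t), 2 ^ j :=
          Finset.sum_le_sum fun t _ => hpt (f t) (hf2n t)
      _ = ∑ t ∈ Finset.range (2 ^ n), ∑ j ∈ Finset.range n,
            if 2 ^ j < f t then 2 ^ j else 0 := by
          simp [Finset.sum_filter]
      _ = ∑ j ∈ Finset.range n, ∑ t ∈ Finset.range (2 ^ n),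
            if 2 ^ j < f t then 2 ^ j else 0 := Finset.sum_comm
      _ ≤ ∑ j ∈ Finset.range n, 2 ^ j * (T j).card := by
          apply Finset.sum_le_sum
          intro j _
          rw [← Finset.sum_filter, Finset.sum_const, smul_eq_mul, mul_comm]
          apply Nat.mul_le_mul_left
          apply Finset.card_le_card
          intro t ht
          simp only [hT, Finset.mem_filter, Finset.mem_range] at ht ⊢
          exact ⟨Nat.lt_succ_of_le (hfW t (lt_of_le_of_lt (Nat.zero_le _) ht.2)), ht.2⟩
  have hcard : ∀ j, j < n → ((T j).card : ℝ) ≤ Δ / (2 ^ (j + 1) * n) := by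
    intro j hj
    have h := hcon j hj
    rwa [hset j, Set.ncard_coe_finset] at h
  have hnR : (0 : ℝ) < n := by exact_mod_cast hn
  have hfin : (d : ℝ) ≤ Δ / 2 := by
    calc (d : ℝ) ≤ ((∑ j ∈ Finset.range n, 2 ^ j * (T j).card : ℕ) : ℝ) :=
          Nat.cast_le.mpr hkey
      _ = ∑ j ∈ Finset.range n, (2 : ℝ) ^ j * (T j).card := by push_cast; ring
      _ ≤ ∑ j ∈ Finset.range n, Δ / (2 * n) := by
          apply Finset.sum_le_sum
          intro j hj
          have h := hcard j (Finset.mem_range.mp hj)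
          have h2 : (0 : ℝ) < 2 ^ j := by positivity
          calc (2 : ℝ) ^ j * (T j).card ≤ 2 ^ j * (Δ / (2 ^ (j + 1) * n)) :=
                mul_le_mul_of_nonneg_left h (le_of_lt h2)
            _ = Δ / (2 * n) := by
                rw [pow_succ]
                field_simp
      _ = Δ / 2 := by
          rw [Finset.sum_const, Finset.card_range, nsmul_eq_mul]
          field_simp
  linarith
end

section
/- Let $h \ge 2$ and $k \ge 1$ be integers and let $B'$ be a collection of $kh$ colored balls, with exactly $h$ balls of each color $i \in \{1,\dots,k\}$. Let $C' \subseteq B'$ be obtained by independently including each ball with probability $\alpha$, where $0 \le \alpha \le \frac{1}{2h}$. Then the probability that $C'$ contains at most one ball of each color (i.e., all colors of balls in $C'$ are distinct) is at most $\exp\left(-k h (h-1) \alpha^2 / 4\right)$. -/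
open Finset MeasureTheory

lemma poly_key (m : ℕ) (α : ℝ) (hm : 1 ≤ m) (h0 : 0 ≤ α) (h1 : 2*((m:ℝ)+1)*α ≤ 1) :
    (1-α)^m * (1+(m:ℝ)*α) ≤ 1 - (m:ℝ)*((m:ℝ)+1)*α^2/4 := by
  induction m, hm using Nat.le_induction with
  | base => push_cast at h1 ⊢; nlinarith
  | succ m hm ih =>
    have hmr : (1:ℝ) ≤ (m:ℝ) := by exact_mod_cast hm
    push_cast at h1 ⊢
    have h1' : 2*((m:ℝ)+1)*α ≤ 1 := by nlinarith
    have ih' := ih (by push_cast; linarith)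
    have hber : (1:ℝ) - (m:ℝ)*α ≤ (1-α)^m := by
      have := one_add_mul_le_pow (a := -α) (by nlinarith) m
      have h2 : (1:ℝ) + (m:ℝ)*(-α) = 1 - m*α := by ring
      rw [h2, ← sub_eq_add_neg] at this
      simpa using this
    have hhalf : (1:ℝ)/2 ≤ (1-α)^m := by nlinarith
    have key : ((m:ℝ)+1)*α^2*(1/2) ≤ ((m:ℝ)+1)*α^2*((1-α)^m) := by
      apply mul_le_mul_of_nonneg_left hhalf; positivity
    rw [pow_succ]
    nlinarith [ih', key]

lemma color_sum (h : ℕ) (a : ENNReal) :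
    ∑ y ∈ Finset.univ.filter (fun y : Fin h → Bool =>
        (Finset.univ.filter fun j => y j = true).card ≤ 1),
      ∏ j, (bif y j then a else 1-a)
    = (1-a)^h + h * (a * (1-a)^(h-1)) := by
  have hset : Finset.univ.filter (fun y : Fin h → Bool =>
        (Finset.univ.filter fun j => y j = true).card ≤ 1)
      = insert (fun _ => false)
          ((Finset.univ : Finset (Fin h)).image fun j0 => fun j => decide (j = j0)) := by
    ext y
    simp only [mem_filter, mem_univ, true_and, mem_insert, mem_image]
    constructor
    · intro hcard
      by_cases hz : ∀ j, y j = false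
      · left; funext j; exact hz j
      · push_neg at hz
        obtain ⟨j0, hj0⟩ := hz
        have hj0' : y j0 = true := by simpa using hj0
        right
        refine ⟨j0, ?_⟩
        funext j
        by_cases hyj : y j = true
        · have hjj : j = j0 :=
            Finset.card_le_one.mp hcard j (by simp [hyj]) j0 (by simp [hj0'])
          simp [hjj, hj0']
        · simp only [Bool.not_eq_true] at hyj
          have hne : j ≠ j0 := fun hjj => by rw [hjj, hj0'] at hyj; simp at hyj
          simp [hyj, hne]
    · rintro (rfl | ⟨j0, rfl⟩)
      · simp
      · have : (Finset.univ.filter fun j => decide (j = j0) = true) = {j0} := by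
          ext j; simp
        rw [this]; simp
  rw [hset]
  rw [Finset.sum_insert]
  · have h1 : ∏ j : Fin h, (bif (fun _ => false) j then a else 1 - a) = (1-a)^h := by
      simp [Finset.prod_const]
    rw [h1]
    congr 1
    rw [Finset.sum_image (by
      intro x _ y _ hxy
      have := congrFun hxy x
      simpa using this)]
    have h2 : ∀ j0 : Fin h,
        ∏ j : Fin h, (bif decide (j = j0) then a else 1-a) = a * (1-a)^(h-1) := by
      intro j0
      rw [← Finset.mul_prod_erase univ _ (mem_univ j0)]
      have hrest : ∀ x ∈ univ.erase j0, (bif decide (x = j0) then a else 1-a) = 1-a := by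
        intro x hx
        simp [Finset.ne_of_mem_erase hx]
      rw [Finset.prod_congr rfl hrest, Finset.prod_const,
        Finset.card_erase_of_mem (mem_univ j0)]
      simp
    rw [Finset.sum_congr rfl (fun j0 _ => h2 j0), Finset.sum_const]
    simp [mul_comm]
  · simp only [mem_image, not_exists]
    intro j0 hmem
    have := congrFun hmem.2 j0
    simp at this

lemma main_aux (h k : ℕ) (hh : 2 ≤ h) (hk : 1 ≤ k)
    (c : Fin (k * h) → Fin k)
    (hc : ∀ i : Fin k, (Finset.univ.filter fun b => c b = i).card = h)
    (α : ℝ) (hα0 : 0 ≤ α) (hα : α ≤ 1 / (2 * (h : ℝ)))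
    (hle : Real.toNNReal α ≤ 1) :
    MeasureTheory.Measure.pi (fun _ : Fin (k * h) =>
        (PMF.bernoulli (Real.toNNReal α) hle).toMeasure)
      {X : Fin (k * h) → Bool |
        ∀ i : Fin k, (Finset.univ.filter fun b => c b = i ∧ X b = true).card ≤ 1} ≤
    ENNReal.ofReal (Real.exp (-((k : ℝ) * (h : ℝ) * ((h : ℝ) - 1) * α ^ 2 / 4))) := by
  have h2 : (2:ℝ) ≤ (h:ℝ) := by exact_mod_cast hh
  have hα4 : α ≤ 1/4 := by
    refine hα.trans ?_
    rw [div_le_div_iff₀ (by linarith) (by norm_num)]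
    linarith
  set a : ENNReal := ENNReal.ofReal α with ha_def
  set μ := MeasureTheory.Measure.pi (fun _ : Fin (k * h) =>
        (PMF.bernoulli (Real.toNNReal α) hle).toMeasure) with hμ_def
  set w : Bool → ENNReal := fun x => bif x then a else 1-a with hw_def
  -- Step A: measure as a finite sum
  have hXsing : ∀ X : Fin (k*h) → Bool, μ {X} = ∏ b, w (X b) := by
    intro X
    rw [← Set.univ_pi_singleton X, hμ_def, MeasureTheory.Measure.pi_pi]
    refine Finset.prod_congr rfl fun b _ => ?_
    rw [PMF.toMeasure_apply_singleton _ _ (measurableSet_singleton _)]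
    rw [PMF.bernoulli_apply]
    cases X b <;> simp [hw_def, ha_def, ENNReal.ofReal, ENNReal.coe_sub]
  have hfinsum : ∀ s : Finset (Fin (k*h) → Bool), μ ↑s = ∑ X ∈ s, ∏ b, w (X b) := by
    intro s
    have hs : (↑s : Set (Fin (k*h) → Bool)) = ⋃ X ∈ s, {X} := by
      ext x; simp
    rw [hs, measure_biUnion_finset]
    · exact Finset.sum_congr rfl fun X _ => hXsing X
    · intro x _ y _ hxy
      simp [Set.disjoint_singleton, hxy]
    · intro b _; exact measurableSet_singleton _
  have hSset : {X : Fin (k * h) → Bool |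
        ∀ i : Fin k, (Finset.univ.filter fun b => c b = i ∧ X b = true).card ≤ 1}
      = ↑(Finset.univ.filter (fun X : Fin (k*h) → Bool =>
        ∀ i : Fin k, (Finset.univ.filter fun b => c b = i ∧ X b = true).card ≤ 1)) := by
    ext X; simp
  rw [hSset, hfinsum]
  -- Step B: the equivalence
  have fib : ∀ i : Fin k, Fintype.card {b : Fin (k*h) // c b = i} = h := by
    intro i; rw [Fintype.card_subtype]; exact hc i
  set fe : ∀ i : Fin k, Fin h ≃ {b : Fin (k*h) // c b = i} :=
    fun i => (Fintype.equivFinOfCardEq (fib i)).symm with hfe_def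
  set e : Fin k × Fin h ≃ Fin (k*h) :=
    (Equiv.sigmaEquivProd (Fin k) (Fin h)).symm.trans
      ((Equiv.sigmaCongrRight fe).trans (Equiv.sigmaFiberEquiv c)) with he_def
  have hce : ∀ i j, c (e (i, j)) = i := fun i j => (fe i j).2
  have hfst : ∀ b, (e.symm b).1 = c b := by
    intro b
    conv_rhs => rw [← e.apply_symm_apply b]
    exact (hce _ _).symm
  -- per-color card identity
  have hcard : ∀ (X : Fin (k*h) → Bool) (i : Fin k),
      (Finset.univ.filter fun b => c b = i ∧ X b = true).card
        = (Finset.univ.filter fun j => X (e (i, j)) = true).card := by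
    intro X i
    refine Finset.card_bij' (fun b _ => (e.symm b).2) (fun j _ => e (i, j)) ?_ ?_ ?_ ?_
    · intro b hb
      simp only [mem_filter, mem_univ, true_and] at hb ⊢
      have h1 : (i, (e.symm b).2) = e.symm b := by
        have : (e.symm b).1 = i := by rw [hfst b, hb.1]
        rw [← this]
      rw [h1, e.apply_symm_apply]
      exact hb.2
    · intro j hj
      simp only [mem_filter, mem_univ, true_and] at hj ⊢
      exact ⟨hce i j, hj⟩
    · intro b hb
      simp only [mem_filter, mem_univ, true_and] at hb
      have h1 : (i, (e.symm b).2) = e.symm b := by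
        have : (e.symm b).1 = i := by rw [hfst b, hb.1]
        rw [← this]
      show e (i, (e.symm b).2) = b
      rw [h1, e.apply_symm_apply]
    · intro j hj
      show (e.symm (e (i, j))).2 = j
      rw [e.symm_apply_apply]
  -- Step B': reindex the sum
  set Q : (Fin h → Bool) → Prop :=
    fun y => (Finset.univ.filter fun j => y j = true).card ≤ 1 with hQ_def
  set E : (Fin (k*h) → Bool) ≃ (Fin k → Fin h → Bool) :=
    (Equiv.arrowCongr e.symm (Equiv.refl Bool)).trans (Equiv.curry _ _ _) with hE_def
  have hEapp : ∀ (X : Fin (k*h) → Bool) i j, E X i j = X (e (i, j)) := fun X i j => rfl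
  have hsum : ∑ X ∈ Finset.univ.filter (fun X : Fin (k*h) → Bool =>
        ∀ i : Fin k, (Finset.univ.filter fun b => c b = i ∧ X b = true).card ≤ 1),
        ∏ b, w (X b)
      = ∑ Y ∈ Fintype.piFinset (fun _ : Fin k => Finset.univ.filter Q),
        ∏ i, ∏ j, w (Y i j) := by
    refine Finset.sum_equiv E ?_ ?_
    · intro X
      simp only [mem_filter, mem_univ, true_and, Fintype.mem_piFinset, hQ_def]
      refine forall_congr' fun i => ?_
      rw [hcard X i]
      rfl
    · intro X _
      rw [← Equiv.prod_comp e (fun b => w (X b)), Fintype.prod_prod_type]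
      rfl
  rw [hsum]
  -- Step C: factorization
  rw [← Finset.prod_univ_sum (fun _ : Fin k => Finset.univ.filter Q)
      (fun _ y => ∏ j, w (y j))]
  rw [Finset.prod_const, Finset.card_univ, Fintype.card_fin]
  -- Step D: single color value
  have hZ : ∑ y ∈ Finset.univ.filter Q, ∏ j, w (y j)
      = (1-a)^h + h * (a * (1-a)^(h-1)) := color_sum h a
  rw [hZ]
  -- Step E: numerics
  have h1m : (0:ℝ) ≤ 1 - α := by linarith
  have h1a : (1:ENNReal) - a = ENNReal.ofReal (1-α) := by
    rw [ENNReal.ofReal_sub _ hα0, ENNReal.ofReal_one]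
  set r : ℝ := (1-α)^h + (h:ℝ) * (α * (1-α)^(h-1)) with hr_def
  have hofr : (1-a)^h + (h:ENNReal) * (a * (1-a)^(h-1)) = ENNReal.ofReal r := by
    rw [h1a, ← ENNReal.ofReal_pow h1m, ← ENNReal.ofReal_pow h1m,
      ← ENNReal.ofReal_mul hα0, ← ENNReal.ofReal_natCast h,
      ← ENNReal.ofReal_mul (by positivity), ← ENNReal.ofReal_add (by positivity) (by positivity)]
  rw [hofr, ← ENNReal.ofReal_pow (by positivity)]
  apply ENNReal.ofReal_le_ofReal
  -- real inequality
  have hre : r = (1-α)^(h-1) * (1 + ((h:ℝ)-1)*α) := by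
    have hp : (1-α)^h = (1-α)^(h-1) * (1-α) := by
      rw [← pow_succ]
      congr 1
      omega
    rw [hr_def, hp]; ring
  have hcast : ((h-1 : ℕ) : ℝ) = (h:ℝ) - 1 := by
    rw [Nat.cast_sub (by omega), Nat.cast_one]
  have h2hα : 2*(h:ℝ)*α ≤ 1 := by
    rw [div_eq_inv_mul] at hα
    calc 2*(h:ℝ)*α ≤ 2*(h:ℝ)*((2*(h:ℝ))⁻¹ * 1) := by
          apply mul_le_mul_of_nonneg_left (by simpa using hα); linarith
      _ = 1 := by field_simp
  have hpk := poly_key (h-1) α (by omega) hα0 (by rw [hcast]; linarith)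
  rw [hcast] at hpk
  have hrle : r ≤ Real.exp (-((h:ℝ) * ((h:ℝ)-1) * α^2/4)) := by
    rw [hre]
    refine hpk.trans ?_
    have := Real.add_one_le_exp (-((h:ℝ) * ((h:ℝ)-1) * α^2/4))
    linarith [this]
  calc r ^ k ≤ (Real.exp (-((h:ℝ) * ((h:ℝ)-1) * α^2/4))) ^ k := by
        apply pow_le_pow_left₀ (by positivity) hrle
    _ = Real.exp (-((k:ℝ) * (h:ℝ) * ((h:ℝ)-1) * α^2/4)) := by
        rw [← Real.exp_nat_mul]; congr 1; ring

/-- Balls-and-colors subsampling lemma: with `k * h` balls colored so that each of the `k`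
colors has exactly `h` balls (`h ≥ 2`), and each ball kept independently with probability
`α ∈ [0, 1/(2h)]`, the probability that at most one ball of each color is kept is at most
`exp (-k h (h-1) α² / 4)`. -/
theorem subsample_distinct_colors (h k : ℕ) (hh : 2 ≤ h) (hk : 1 ≤ k)
    (c : Fin (k * h) → Fin k)
    (hc : ∀ i : Fin k, (Finset.univ.filter fun b => c b = i).card = h)
    (α : ℝ) (hα0 : 0 ≤ α) (hα : α ≤ 1 / (2 * (h : ℝ))) :
    MeasureTheory.Measure.pi (fun _ : Fin (k * h) =>
        (PMF.bernoulli (Real.toNNReal α) (by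
          rw [Real.toNNReal_le_one]
          have h2 : (2 : ℝ) ≤ (h : ℝ) := by exact_mod_cast hh
          have hpos : (0 : ℝ) < 2 * (h : ℝ) := by linarith
          have : (1 : ℝ) / (2 * (h : ℝ)) ≤ 1 := by
            rw [div_le_one hpos]; linarith
          linarith)).toMeasure)
      {X : Fin (k * h) → Bool |
        ∀ i : Fin k, (Finset.univ.filter fun b => c b = i ∧ X b = true).card ≤ 1} ≤
    ENNReal.ofReal (Real.exp (-((k : ℝ) * (h : ℝ) * ((h : ℝ) - 1) * α ^ 2 / 4))) := by
  exact main_aux h k hh hk c hc α hα0 hα _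
end
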